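/- Suppose i < n satisfies max(DX i) ≥ α and min(DX i) < α. Then: (1) every value v ∈ DX i with v > α is inconsistent; (2) every value v ∈ DX i with v < α is consistent; (3) if moreover α ∈ DX i, then α is inconsistent if and only if cx(α) + 1 = cy(α), γ holds, and either (min(DX i) = β and cx(β) > cy(β) + 1), or (min(DX i) = β and cx(β) = cy(β) + 1 and σ holds), or min(DX i) < β. -/

import Mathlib

/-!
Comparing `x ≤ₘ y` amounts to comparing multiplicities at the largest value where they differ,
i.e. the colexicographic order on multiplicity functions. That order is linear, translation
invariant, and monotone under raising entries of a vector, so `X i = v` is consistent exactly when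
the vector that is `min (DX j)` everywhere except `v` at `i` lies `≤ₘ` the vector of the
`max (DY j)`. Its multiplicity function is `cx` with one occurrence of `min (DX i)` replaced by
`v`, and all three claims reduce to locating the largest value where this function and `cy`
differ.
-/

namespace MsetPaper

/-- The maximum element of a multiset of naturals (`0` for the empty multiset). -/
def mmax (s : Multiset ℕ) : ℕ := s.sup

/-- The strict multiset order `x <ₘ y` of the paper: either `x` is empty and `y` is not,
or both are nonempty and either `max x < max y`, or the maxima agree and the multisets
with one occurrence of the maximum removed are again strictly ordered. -/
inductive MLt : Multiset ℕ → Multiset ℕ → Prop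
  | empty {y : Multiset ℕ} : y ≠ 0 → MLt 0 y
  | maxLt {x y : Multiset ℕ} : x ≠ 0 → y ≠ 0 → mmax x < mmax y → MLt x y
  | maxEq {x y : Multiset ℕ} : x ≠ 0 → y ≠ 0 → mmax x = mmax y →
      MLt (x.erase (mmax x)) (y.erase (mmax y)) → MLt x y

/-- The (non-strict) multiset order `x ≤ₘ y`. -/
def MLe (x y : Multiset ℕ) : Prop := MLt x y ∨ x = y

/-- The multiset of values taken by a vector. -/
def msetOf {n : ℕ} (x : Fin n → ℕ) : Multiset ℕ := (List.ofFn x : List ℕ)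

/-- `(x, y)` is a satisfying assignment for the constraint `X ≤ₘ Y`. -/
def SatLe {n : ℕ} (DX DY : Fin n → Finset ℕ) (x y : Fin n → ℕ) : Prop :=
  (∀ i, x i ∈ DX i) ∧ (∀ i, y i ∈ DY i) ∧ MLe (msetOf x) (msetOf y)

/-- The value `v` is consistent for the variable `X i`. -/
def ConsX {n : ℕ} (DX DY : Fin n → Finset ℕ) (i : Fin n) (v : ℕ) : Prop :=
  ∃ x y, SatLe DX DY x y ∧ x i = v

/-- The value `v` is consistent for the variable `Y i`. -/
def ConsY {n : ℕ} (DX DY : Fin n → Finset ℕ) (i : Fin n) (v : ℕ) : Prop :=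
  ∃ x y, SatLe DX DY x y ∧ y i = v

/-- The constraint `X ≤ₘ Y` is generalised arc-consistent. -/
def GACLe {n : ℕ} (DX DY : Fin n → Finset ℕ) : Prop :=
  (∀ i, ∀ v ∈ DX i, ConsX DX DY i v) ∧ (∀ i, ∀ v ∈ DY i, ConsY DX DY i v)

/-- `cx DX hDX v` counts the indices `i` with `min (DX i) = v`
(the occurrence vector of `floor(X)`). -/
def cx {n : ℕ} (DX : Fin n → Finset ℕ) (hDX : ∀ i, (DX i).Nonempty) (v : ℕ) : ℕ :=
  (Finset.univ.filter fun i => (DX i).min' (hDX i) = v).card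

/-- `cy DY hDY v` counts the indices `i` with `max (DY i) = v`
(the occurrence vector of `ceiling(Y)`). -/
def cy {n : ℕ} (DY : Fin n → Finset ℕ) (hDY : ∀ i, (DY i).Nonempty) (v : ℕ) : ℕ :=
  (Finset.univ.filter fun i => (DY i).max' (hDY i) = v).card

open Finset Finsupp

lemma mmax_mem {s : Multiset ℕ} (hs : s ≠ 0) : mmax s ∈ s := by
  obtain ⟨a, ha, hsup⟩ := s.toFinset.exists_mem_eq_sup (by simpa using hs) id
  have : mmax s = s.toFinset.sup id := by
    simp [mmax, Finset.sup_def, Multiset.sup_dedup]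
  simpa [this, hsup] using ha

lemma count_eq_zero_of_mmax_lt {s : Multiset ℕ} {w : ℕ} (h : mmax s < w) : s.count w = 0 :=
  Multiset.count_eq_zero.mpr fun hw => (Multiset.le_sup hw).not_gt h

lemma msetOf_eq_sum {n : ℕ} (x : Fin n → ℕ) : msetOf x = ∑ j, {x j} := by
  rw [msetOf, ← Fin.univ_val_map, Finset.sum_eq_multiset_sum]
  exact (Multiset.sum_map_singleton _).symm.trans (congrArg _ (Multiset.map_map _ _ _))

lemma count_msetOf {n : ℕ} (x : Fin n → ℕ) (w : ℕ) :
    (msetOf x).count w = #{j | x j = w} := by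
  rw [msetOf, ← Fin.univ_val_map, Multiset.count_map, Finset.card_def, Finset.filter_val]
  simp only [eq_comm]

lemma msetOf_update_add {n : ℕ} (x : Fin n → ℕ) (i : Fin n) (v : ℕ) :
    msetOf (Function.update x i v) + {x i} = msetOf x + {v} := by
  rw [msetOf_eq_sum, msetOf_eq_sum, ← Finset.add_sum_erase _ _ (mem_univ i),
    ← Finset.add_sum_erase _ _ (mem_univ i), Function.update_self,
    Finset.sum_congr rfl fun j hj => by rw [Function.update_of_ne (ne_of_mem_erase hj)]]
  abel

def ColexLT (f g : ℕ → ℕ) : Prop := ∃ u, (∀ w, u < w → f w = g w) ∧ f u < g u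

noncomputable def countColex : Multiset ℕ →+ Colex (ℕ →₀ ℕ) where
  toFun s := toColex (Multiset.toFinsupp s)
  map_zero' := by simp
  map_add' s t := by simp [toColex_add]

lemma countColex_lt_iff {s t : Multiset ℕ} :
    countColex s < countColex t ↔ ColexLT (s.count ·) (t.count ·) :=
  Iff.rfl

lemma countColex_injective : Function.Injective countColex :=
  Multiset.toFinsupp.injective

lemma countColex_singleton (a : ℕ) : countColex {a} = toColex (single a 1) := by
  simp [countColex, Multiset.toFinsupp_singleton]

lemma countColex_lt_of_mmax_lt {s t : Multiset ℕ} (ht : t ≠ 0) (h : mmax s < mmax t) :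
    countColex s < countColex t :=
  countColex_lt_iff.mpr ⟨mmax t, fun w hw => by
      simp only [count_eq_zero_of_mmax_lt (h.trans hw), count_eq_zero_of_mmax_lt hw],
    by simpa [count_eq_zero_of_mmax_lt h] using Multiset.count_pos.mpr (mmax_mem ht)⟩

lemma countColex_erase_add {s : Multiset ℕ} (hs : s ≠ 0) :
    countColex (s.erase (mmax s)) + countColex {mmax s} = countColex s := by
  rw [← map_add, Multiset.add_singleton_eq_iff.mpr ⟨mmax_mem hs, rfl⟩]

lemma mlt_iff_countColex_lt {s t : Multiset ℕ} : MLt s t ↔ countColex s < countColex t := by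
  constructor
  · intro h
    induction h with
    | empty ht =>
      rw [map_zero, ← bot_eq_zero, bot_lt_iff_ne_bot, bot_eq_zero, ← map_zero countColex]
      exact countColex_injective.ne ht
    | maxLt _ ht hlt => exact countColex_lt_of_mmax_lt ht hlt
    | @maxEq x y hx hy heq _ ih =>
      have : countColex (x.erase (mmax x)) + countColex {mmax x} <
          countColex (y.erase (mmax y)) + countColex {mmax x} := by gcongr
      rwa [countColex_erase_add hx, heq, countColex_erase_add hy] at this
  · induction s using Multiset.strongInductionOn generalizing t with
    | ih s ih =>
      intro h
      have ht : t ≠ 0 := by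
        rintro rfl
        rw [map_zero, ← bot_eq_zero] at h
        exact not_lt_bot h
      rcases eq_or_ne s 0 with rfl | hs
      · exact MLt.empty ht
      rcases lt_trichotomy (mmax s) (mmax t) with hlt | heq | hgt
      · exact MLt.maxLt hs ht hlt
      · refine MLt.maxEq hs ht heq (ih _ (Multiset.erase_lt.mpr (mmax_mem hs)) ?_)
        rw [← countColex_erase_add hs, ← countColex_erase_add ht, ← heq] at h
        rw [← heq]
        exact lt_of_add_lt_add_right h
      · exact (lt_asymm h (countColex_lt_of_mmax_lt hs hgt)).elim

lemma mle_iff_countColex_le {s t : Multiset ℕ} : MLe s t ↔ countColex s ≤ countColex t := by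
  rw [MLe, mlt_iff_countColex_lt, le_iff_lt_or_eq, countColex_injective.eq_iff]

lemma countColex_msetOf_mono {n : ℕ} {x x' : Fin n → ℕ} (h : ∀ j, x j ≤ x' j) :
    countColex (msetOf x) ≤ countColex (msetOf x') := by
  rw [msetOf_eq_sum, msetOf_eq_sum, map_sum, map_sum]
  gcongr with j
  simpa only [countColex_singleton] using Colex.single_le_iff.mpr (h j)

lemma count_msetOf_min' {n : ℕ} (DX : Fin n → Finset ℕ) (hDX : ∀ i, (DX i).Nonempty) (w : ℕ) :
    (msetOf fun j => (DX j).min' (hDX j)).count w = cx DX hDX w :=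
  count_msetOf _ w

lemma count_msetOf_max' {n : ℕ} (DY : Fin n → Finset ℕ) (hDY : ∀ i, (DY i).Nonempty) (w : ℕ) :
    (msetOf fun j => (DY j).max' (hDY j)).count w = cy DY hDY w :=
  count_msetOf _ w

lemma consX_iff_countColex_le {n : ℕ} {DX DY : Fin n → Finset ℕ} (hDX : ∀ i, (DX i).Nonempty)
    (hDY : ∀ i, (DY i).Nonempty) {i : Fin n} {v : ℕ} (hv : v ∈ DX i) :
    ConsX DX DY i v ↔ countColex (msetOf (Function.update (fun j => (DX j).min' (hDX j)) i v)) ≤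
      countColex (msetOf fun j => (DY j).max' (hDY j)) := by
  constructor
  · rintro ⟨x, y, ⟨hx, hy, hxy⟩, rfl⟩
    calc _ ≤ countColex (msetOf x) := countColex_msetOf_mono fun j => ?_
      _ ≤ countColex (msetOf y) := mle_iff_countColex_le.mp hxy
      _ ≤ _ := countColex_msetOf_mono fun j => le_max' _ _ (hy j)
    rcases eq_or_ne j i with rfl | hj
    · simp
    · rw [Function.update_of_ne hj]
      exact min'_le _ _ (hx j)
  · intro h
    refine ⟨_, _, ⟨fun j => ?_, fun j => max'_mem _ _, mle_iff_countColex_le.mpr h⟩,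
      Function.update_self ..⟩
    rcases eq_or_ne j i with rfl | hj
    · simpa
    · rw [Function.update_of_ne hj]
      exact min'_mem _ _

section Replace

-- `d` is `cx` with one occurrence of `m` replaced by `v`, written without truncated subtraction.
variable {cx cy d : ℕ → ℕ} {m v α : ℕ}

lemma colexLT_replace_of_lt
    (hd : ∀ w, d w + (if w = m then 1 else 0) = cx w + (if w = v then 1 else 0))
    (hm : m < v) (hagree : ∀ w, v ≤ w → cx w = cy w) : ColexLT cy d := by
  refine ⟨v, fun w hw => ?_, ?_⟩
  · have := hd w
    have := hagree w hw.le
    split_ifs at * <;> omega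
  · have := hd v
    have := hagree v le_rfl
    split_ifs at * <;> omega

lemma replace_colexLT_of_lt
    (hd : ∀ w, d w + (if w = m then 1 else 0) = cx w + (if w = v then 1 else 0))
    (hm : m < α) (hv : v < α) (hα1 : cx α < cy α) (hα2 : ∀ b, α < b → cx b = cy b) :
    ColexLT d cy := by
  refine ⟨α, fun w hw => ?_, ?_⟩
  · have := hd w
    have := hα2 w hw
    split_ifs at * <;> omega
  · have := hd α
    split_ifs at * <;> omega

end Replace

section ReplaceByAlpha

variable {cx cy d : ℕ → ℕ} {m α β : ℕ}
  (hd : ∀ w, d w + (if w = m then 1 else 0) = cx w + (if w = α then 1 else 0))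
  (hα2 : ∀ b, α < b → cx b = cy b) (hβ1 : cy β < cx β)
include hd hα2 hβ1

lemma conditions_of_colexLT_replace (hm : m < α) (hα1 : cx α < cy α)
    (hβ2 : ∀ v, β < v → v < α → cx v ≤ cy v) (h : ColexLT cy d) :
    cx α + 1 = cy α ∧ (∀ v, β < v → v < α → cx v = cy v) ∧
      ((m = β ∧ cy β + 1 < cx β) ∨
        (m = β ∧ cx β = cy β + 1 ∧
          ∃ a < β, cy a < cx a ∧ ∀ w, a < w → w < β → cx w = cy w) ∨
        m < β) := by
  obtain ⟨u, hup, hu⟩ := h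
  have hdu := hd u
  have huα : u < α := by
    by_contra! hαu
    rcases hαu.eq_or_lt with rfl | hαu
    · split_ifs at hdu <;> omega
    · have := hα2 u hαu
      split_ifs at hdu <;> omega
  have hcxα : cx α + 1 = cy α := by
    have := hup α huα
    have := hd α
    split_ifs at * <;> omega
  have huβ : u ≤ β := by
    by_contra! hβu
    have := hβ2 u hβu huα
    split_ifs at hdu <;> omega
  have hmβ : m ≤ β := by
    by_contra! hβm
    have := hup m (huβ.trans_lt hβm)
    have := hβ2 m hβm hm
    have := hd m
    split_ifs at * <;> omega
  have hgap : ∀ v, β < v → v < α → cx v = cy v := by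
    intro v hβv hvα
    have := hup v (huβ.trans_lt hβv)
    have := hd v
    split_ifs at * <;> omega
  refine ⟨hcxα, hgap, ?_⟩
  rcases huβ.eq_or_lt with rfl | huβ
  · rcases hmβ.eq_or_lt with rfl | hmu
    · left
      split_ifs at hdu <;> omega
    · exact Or.inr (Or.inr hmu)
  · have := hup β huβ
    have := hd β
    have hmβ : m = β := by
      by_contra
      split_ifs at * <;> omega
    subst hmβ
    refine Or.inr (Or.inl ⟨rfl, by split_ifs at * <;> omega, u, huβ, ?_, fun w huw hwm => ?_⟩)
    · split_ifs at hdu <;> omega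
    · have := hup w huw
      have := hd w
      split_ifs at * <;> omega

lemma colexLT_replace_of_conditions (hβα : β < α) (hcxα : cx α + 1 = cy α)
    (hgap : ∀ v, β < v → v < α → cx v = cy v)
    (hcase : (m = β ∧ cy β + 1 < cx β) ∨
        (m = β ∧ cx β = cy β + 1 ∧
          ∃ a < β, cy a < cx a ∧ ∀ w, a < w → w < β → cx w = cy w) ∨
        m < β) : ColexLT cy d := by
  have hmβ : m ≤ β := by omega
  have habove : ∀ w, β < w → cy w = d w := by
    intro w hβw
    have := hd w
    rcases lt_trichotomy w α with hwα | rfl | hαw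
    · have := hgap w hβw hwα
      split_ifs at * <;> omega
    · split_ifs at * <;> omega
    · have := hα2 w hαw
      split_ifs at * <;> omega
  have hdβ := hd β
  rcases hcase with ⟨rfl, hgt⟩ | ⟨rfl, hβeq, a, haβ, ha, hagap⟩ | hmβ
  · exact ⟨m, habove, by split_ifs at hdβ <;> omega⟩
  · refine ⟨a, fun w haw => ?_, by have := hd a; split_ifs at * <;> omega⟩
    rcases lt_trichotomy w m with hwm | rfl | hmw
    · have := hd w
      have := hagap w haw hwm
      split_ifs at * <;> omega
    · split_ifs at hdβ <;> omega
    · exact habove w hmw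
  · exact ⟨β, habove, by split_ifs at hdβ <;> omega⟩

end ReplaceByAlpha

theorem stmt11_general (n : ℕ) (DX DY : Fin n → Finset ℕ)
    (hDX : ∀ i, (DX i).Nonempty) (hDY : ∀ i, (DY i).Nonempty)
    (α : ℕ)
    (hα1 : cx DX hDX α < cy DY hDY α)
    (hα2 : ∀ b : ℕ, α < b → cx DX hDX b = cy DY hDY b)
    (β : ℕ) (hβα : β < α)
    (hβ1 : cy DY hDY β < cx DX hDX β)
    (hβ2 : ∀ v : ℕ, β < v → v < α → cx DX hDX v ≤ cy DY hDY v)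
    (γ : Prop) (hγ : γ ↔ (β = α - 1 ∨ ∀ v : ℕ, β < v → v < α → cx DX hDX v = cy DY hDY v))
    (σ : Prop) (hσ : σ ↔ ∃ a : ℕ, a < β ∧ cy DY hDY a < cx DX hDX a ∧
      ∀ w : ℕ, a < w → w < β → cx DX hDX w = cy DY hDY w)
    (i : Fin n) (hmin : (DX i).min' (hDX i) < α) :
    (∀ v ∈ DX i, α < v → ¬ ConsX DX DY i v) ∧
    (∀ v ∈ DX i, v < α → ConsX DX DY i v) ∧
    (α ∈ DX i →
      (¬ ConsX DX DY i α ↔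
        cx DX hDX α + 1 = cy DY hDY α ∧ γ ∧
          (((DX i).min' (hDX i) = β ∧ cy DY hDY β + 1 < cx DX hDX β) ∨
           ((DX i).min' (hDX i) = β ∧ cx DX hDX β = cy DY hDY β + 1 ∧ σ) ∨
           (DX i).min' (hDX i) < β))) := by
  have hcount : ∀ v w, (msetOf (Function.update (fun j => (DX j).min' (hDX j)) i v)).count w +
      (if w = (DX i).min' (hDX i) then 1 else 0) = cx DX hDX w + (if w = v then 1 else 0) := by
    intro v w
    simpa only [Multiset.count_add, Multiset.count_singleton, count_msetOf_min'] using
      congrArg (Multiset.count w) (msetOf_update_add (fun j => (DX j).min' (hDX j)) i v)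
  have hγ' : γ ↔ ∀ v, β < v → v < α → cx DX hDX v = cy DY hDY v :=
    hγ.trans ⟨fun h v hβv hvα => h.elim (fun _ => by omega) (· v hβv hvα), Or.inr⟩
  refine ⟨fun v hv hαv => ?_, fun v hv hvα => ?_, fun hα => ?_⟩
  · rw [consX_iff_countColex_le hDX hDY hv, not_le, countColex_lt_iff]
    simp only [count_msetOf_max']
    exact colexLT_replace_of_lt (hcount v) (hmin.trans hαv) fun w hw => hα2 w (hαv.trans_le hw)
  · rw [consX_iff_countColex_le hDX hDY hv]
    refine (countColex_lt_iff.mpr ?_).le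
    simp only [count_msetOf_max']
    exact replace_colexLT_of_lt (hcount v) hmin hvα hα1 hα2
  · rw [consX_iff_countColex_le hDX hDY hα, not_le, countColex_lt_iff, hγ', hσ]
    simp only [count_msetOf_max']
    exact ⟨conditions_of_colexLT_replace (hcount α) hα2 hβ1 hmin hα1 hβ2,
      fun ⟨hcxα, hgap, hcase⟩ =>
        colexLT_replace_of_conditions (hcount α) hα2 hβ1 hβα hcxα hgap hcase⟩

/-- Theorem 5 of the paper (values of `X i` when `max(DX i) ≥ α > min(DX i)`). -/
theorem stmt11 (n : ℕ) (hn : 1 ≤ n) (DX DY : Fin n → Finset ℕ)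
    (hDX : ∀ i, (DX i).Nonempty) (hDY : ∀ i, (DY i).Nonempty)
    (α : ℕ)
    (hα1 : cx DX hDX α < cy DY hDY α)
    (hα2 : ∀ b : ℕ, α < b → cx DX hDX b = cy DY hDY b)
    (β : ℕ) (hβα : β < α)
    (hβ1 : cy DY hDY β < cx DX hDX β)
    (hβ2 : ∀ v : ℕ, β < v → v < α → cx DX hDX v ≤ cy DY hDY v)
    (γ : Prop) (hγ : γ ↔ (β = α - 1 ∨ ∀ v : ℕ, β < v → v < α → cx DX hDX v = cy DY hDY v))
    (σ : Prop) (hσ : σ ↔ ∃ a : ℕ, a < β ∧ cy DY hDY a < cx DX hDX a ∧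
      ∀ w : ℕ, a < w → w < β → cx DX hDX w = cy DY hDY w)
    (i : Fin n) (hmax : α ≤ (DX i).max' (hDX i)) (hmin : (DX i).min' (hDX i) < α) :
    (∀ v ∈ DX i, α < v → ¬ ConsX DX DY i v) ∧
    (∀ v ∈ DX i, v < α → ConsX DX DY i v) ∧
    (α ∈ DX i →
      (¬ ConsX DX DY i α ↔
        cx DX hDX α + 1 = cy DY hDY α ∧ γ ∧
          (((DX i).min' (hDX i) = β ∧ cy DY hDY β + 1 < cx DX hDX β) ∨
           ((DX i).min' (hDX i) = β ∧ cx DX hDX β = cy DY hDY β + 1 ∧ σ) ∨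
           (DX i).min' (hDX i) < β))) :=
  stmt11_general n DX DY hDX hDY α hα1 hα2 β hβα hβ1 hβ2 γ hγ σ hσ i hmin

end MsetPaper
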